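/- arXiv:2405.08985 — 2 statements merged into one kernel-verified Lean document; each statement's English description precedes it below -/
import Mathlib

section
/- Let G_φ be the mapping torus group of an injective endomorphism φ : F → F of a free group F, with stable letter t. For any u ∈ F and any integer m ≥ 1, the subgroup ⟨u t^m, F⟩ of G_φ equals ⟨t^m, F⟩ and has index m in G_φ; moreover, setting s = u t^m, this subgroup is isomorphic to the mapping torus group G_ψ of the injective endomorphism ψ : F → F defined by ψ(x) = u φ^m(x) u⁻¹, via an isomorphism that restricts to the identity on F and sends the stable letter of G_ψ to s. -/
/-- The set of relators for the mapping torus (ascending HNN extension) of an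
endomorphism `ψ : G →* G`: generators are the elements of `G` together with one
stable letter `t`, relators are the multiplication table of `G` together with
`t g t⁻¹ = ψ g` for all `g : G`. -/
def mappingTorusRels (G : Type*) [Group G] (ψ : G →* G) : Set (FreeGroup (G ⊕ Unit)) :=
  (Set.range fun p : G × G =>
      FreeGroup.of (Sum.inl p.1) * FreeGroup.of (Sum.inl p.2) *
        (FreeGroup.of (Sum.inl (p.1 * p.2)))⁻¹) ∪
  (Set.range fun g : G =>
      FreeGroup.of (Sum.inr ()) * FreeGroup.of (Sum.inl g) * (FreeGroup.of (Sum.inr ()))⁻¹ *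
        (FreeGroup.of (Sum.inl (ψ g)))⁻¹)

/-- The mapping torus group `G_ψ = ⟨G, t | t x t⁻¹ = ψ(x), x ∈ G⟩` of an endomorphism
`ψ : G →* G`. -/
abbrev MappingTorus {G : Type*} [Group G] (ψ : G →* G) : Type _ :=
  PresentedGroup (mappingTorusRels G ψ)

/-- The canonical homomorphism of the base group into the mapping torus. -/
def MappingTorus.base {G : Type*} [Group G] (ψ : G →* G) : G →* MappingTorus ψ :=
  MonoidHom.mk' (fun g => PresentedGroup.of (rels := mappingTorusRels G ψ) (Sum.inl g))
    (by
      intro g h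
      have key : PresentedGroup.mk (mappingTorusRels G ψ)
          (FreeGroup.of (Sum.inl g) * FreeGroup.of (Sum.inl h) *
            (FreeGroup.of (Sum.inl (g * h)))⁻¹) = 1 := by
        apply (QuotientGroup.eq_one_iff _).mpr
        exact Subgroup.subset_normalClosure (Or.inl ⟨(g, h), rfl⟩)
      rw [map_mul, map_mul, map_inv, mul_inv_eq_one] at key
      exact key.symm)

/-- The stable letter `t` of the mapping torus. -/
def MappingTorus.stable {G : Type*} [Group G] (ψ : G →* G) : MappingTorus ψ :=
  PresentedGroup.of (Sum.inr ())

/-- A subgroup is generated by two elements. -/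
def TwoGenerated {Γ : Type*} [Group Γ] (H : Subgroup Γ) : Prop :=
  ∃ x y : Γ, H = Subgroup.closure {x, y}

/-- A group is free (on some basis). -/
def IsFree (Γ : Type*) [Group Γ] : Prop :=
  ∃ S : Set Γ, Nonempty (FreeGroup S ≃* Γ)

/-- `iterateHom φ m` is the `m`-th power `φ^m` of the endomorphism `φ` under composition. -/
def iterateHom {Γ : Type*} [Group Γ] (φ : Γ →* Γ) : ℕ → (Γ →* Γ)
  | 0 => MonoidHom.id Γ
  | n + 1 => φ.comp (iterateHom φ n)

/-- `H` is a finitary sub-mapping torus subgroup of the mapping torus of `φ`: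
`H = ⟨s, V⟩` where `s = u t^m`, `u ∈ F`, `m ≥ 1`, `V ≤ F` nontrivial finitely generated
and `s V s⁻¹ ≤ V`. -/
def IsSubMappingTorus {α : Type*} (φ : FreeGroup α →* FreeGroup α)
    (H : Subgroup (MappingTorus φ)) : Prop :=
  ∃ (u : FreeGroup α) (m : ℕ) (V : Subgroup (FreeGroup α)),
    1 ≤ m ∧ V ≠ ⊥ ∧ V.FG ∧
    H = Subgroup.closure (insert (MappingTorus.base φ u * MappingTorus.stable φ ^ m)
          ((V.map (MappingTorus.base φ) : Subgroup (MappingTorus φ)) : Set (MappingTorus φ))) ∧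
    ∀ g ∈ V.map (MappingTorus.base φ),
      (MappingTorus.base φ u * MappingTorus.stable φ ^ m) * g *
        (MappingTorus.base φ u * MappingTorus.stable φ ^ m)⁻¹ ∈ V.map (MappingTorus.base φ)

/-- `U` is a free factor of `Γ`: there is a subgroup `W` such that `Γ` is the internal
free product of `U` and `W`, i.e. the canonical map `U ∗ W → Γ` is an isomorphism. -/
def IsFreeFactor {Γ : Type*} [Group Γ] (U : Subgroup Γ) : Prop :=
  ∃ W : Subgroup Γ, Function.Bijective (Monoid.Coprod.lift U.subtype W.subtype)

/-- The outer class of the automorphism `φ` is fully irreducible: no positive power of `φ`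
maps a nontrivial proper free factor to a conjugate of itself. -/
def FullyIrreducible {Γ : Type*} [Group Γ] (φ : MulAut Γ) : Prop :=
  ¬ ∃ (p : ℕ) (U : Subgroup Γ) (g : Γ), 1 ≤ p ∧ U ≠ ⊥ ∧ U ≠ ⊤ ∧ IsFreeFactor U ∧
      U.map (φ ^ p).toMonoidHom = U.map (MulAut.conj g).toMonoidHom

/-- The automorphism `φ` is atoroidal: no positive power of `φ` fixes a nontrivial
conjugacy class. -/
def Atoroidal {Γ : Type*} [Group Γ] (φ : MulAut Γ) : Prop :=
  ¬ ∃ (p : ℕ) (u : Γ), 1 ≤ p ∧ u ≠ 1 ∧ IsConj ((φ ^ p) u) u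

/-- The single relator `b a b⁻¹ a` of the Klein bottle group `⟨a, b | b a b⁻¹ = a⁻¹⟩`. -/
def kleinBottleRels : Set (FreeGroup (Fin 2)) :=
  {FreeGroup.of 1 * FreeGroup.of 0 * (FreeGroup.of 1)⁻¹ * FreeGroup.of 0}

/-- The Klein bottle group `BS(1,-1) = ⟨a, b | b a b⁻¹ = a⁻¹⟩`. -/
abbrev KleinBottleGroup : Type := PresentedGroup kleinBottleRels

/-- `Γ` is a free abelian group of rank `n`. -/
def FreeAbelianOfRank (Γ : Type*) [Group Γ] (n : ℕ) : Prop :=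
  Nonempty (Γ ≃* Multiplicative (Fin n → ℤ))


/-!
The subgroup `K = ⟨t^m, F⟩` is normal: conjugation by `t` maps `F` into `F` and fixes `t^m`,
and conjugation by `t⁻¹ = t^(m-1) t^(-m)` then preserves `K` too. Since `F ≤ K`, the quotient
`G_φ / K` is generated by the image of `t`, so `K` is the kernel of the height map
`G_φ → ℤ/m`, `F ↦ 0`, `t ↦ 1`, and has index `m`; as `u ∈ F`, `⟨u t^m, F⟩ = K`.

The relations of `G_ψ` hold for `F` and `s = u t^m`, which gives a homomorphism `G_ψ → G_φ`
onto `K`. It is injective because `G_φ` maps to the wreath product `G_ψ ≀ ℤ/m`, sending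
`x ∈ F` to the family `(φ^j x)_j` and `t` to the cyclic shift decorated by `u⁻¹ t_ψ` at the
coordinate `-1`; on the image of `G_ψ` the coordinate `0` of this map inverts `G_ψ → G_φ`.
-/

lemma iterateHom_apply {G : Type*} [Group G] (φ : G →* G) (n : ℕ) (g : G) :
    iterateHom φ n g = (⇑φ)^[n] g := by
  induction n with
  | zero => rfl
  | succ n ih => rw [Function.iterate_succ_apply', ← ih]; rfl

lemma Subgroup.closure_insert_mul_of_mem {G : Type*} [Group G] {S : Set G} {a : G}
    (ha : a ∈ closure S) (x : G) : closure (insert (a * x) S) = closure (insert x S) := by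
  have hS : ∀ x, closure S ≤ closure (insert x S) := fun x => closure_mono (Set.subset_insert x S)
  have hx : ∀ x, x ∈ closure (insert x S) := fun x => subset_closure (Set.mem_insert x S)
  apply le_antisymm <;> rw [closure_le, Set.insert_subset_iff]
  · exact ⟨mul_mem (hS x ha) (hx x), subset_closure.trans (hS x)⟩
  · refine ⟨?_, subset_closure.trans (hS _)⟩
    simpa using mul_mem (inv_mem (hS _ ha)) (hx (a * x))

lemma ZMod.val_add_one_of_ne_neg_one {m : ℕ} [NeZero m] {j : ZMod m} (hj : j ≠ -1) :
    (j + 1).val = j.val + 1 := by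
  obtain ⟨n, rfl⟩ := Nat.exists_eq_succ_of_ne_zero (NeZero.ne m)
  have h_last : (-1 : ZMod (n + 1)) = Fin.last n :=
    (eq_neg_of_add_eq_zero_left (Fin.last_add_one n)).symm
  exact (Fin.val_add_one j).trans (if_neg (h_last ▸ hj))

lemma ZMod.val_neg_one_add_one (m : ℕ) [NeZero m] : (-1 : ZMod m).val + 1 = m := by
  obtain ⟨n, rfl⟩ := Nat.exists_eq_succ_of_ne_zero (NeZero.ne m)
  rw [ZMod.val_neg_one]

lemma SemidirectProduct.mk_mul_inl_mul_inv {N H : Type*} [Group N] [Group H]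
    {ϕ : H →* MulAut N} (n : N) (h : H) (n' : N) :
    (⟨n, h⟩ : N ⋊[ϕ] H) * inl n' * (⟨n, h⟩ : N ⋊[ϕ] H)⁻¹ = inl (n * ϕ h n' * n⁻¹) := by
  ext <;> simp [mul_assoc]

def shiftMulAut (A N : Type*) [AddGroup A] [Group N] : Multiplicative A →* MulAut (A → N) where
  toFun k :=
    { toFun := fun f j => f (j + k.toAdd)
      invFun := fun f j => f (j - k.toAdd)
      left_inv := fun f => funext fun j => by simp
      right_inv := fun f => funext fun j => by simp
      map_mul' := fun _ _ => rfl }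
  map_one' := by ext; simp
  map_mul' k l := by ext; simp [add_assoc]

@[simp] lemma shiftMulAut_apply {A N : Type*} [AddGroup A] [Group N] (k : Multiplicative A)
    (f : A → N) (j : A) : shiftMulAut A N k f j = f (j + k.toAdd) :=
  rfl

namespace MappingTorus

section Presentation

variable {G : Type*} [Group G] (ψ : G →* G)

lemma stable_mul_base_mul_inv (g : G) :
    stable ψ * base ψ g * (stable ψ)⁻¹ = base ψ (ψ g) :=
  mul_inv_eq_one.mp <| PresentedGroup.one_of_mem (Or.inr ⟨g, rfl⟩)

lemma stable_pow_mul_base_mul_inv (n : ℕ) (g : G) :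
    stable ψ ^ n * base ψ g * (stable ψ ^ n)⁻¹ = base ψ ((⇑ψ)^[n] g) := by
  induction n generalizing g with
  | zero => simp
  | succ n ih =>
    rw [pow_succ, Function.iterate_succ_apply, ← ih, ← stable_mul_base_mul_inv]
    group

lemma closure_insert_stable_range_base :
    Subgroup.closure (insert (stable ψ) (Set.range (base ψ))) = ⊤ := by
  rw [← PresentedGroup.closure_range_of]
  congr 1
  ext x
  simp only [Set.mem_insert_iff, Set.mem_range, Sum.exists, eq_comm (a := x)]
  exact or_comm.trans (or_congr Iff.rfl ⟨fun h => ⟨(), h⟩, fun ⟨_, h⟩ => h⟩)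

variable {ψ} {H : Type*} [Group H]

def lift (f : G →* H) (s : H) (hs : ∀ g, s * f g * s⁻¹ = f (ψ g)) : MappingTorus ψ →* H :=
  PresentedGroup.toGroup (f := Sum.elim f fun _ => s) <| by
    rintro _ (⟨⟨g, h⟩, rfl⟩ | ⟨g, rfl⟩) <;> simp [hs]

@[simp] lemma lift_base (f : G →* H) (s : H) (hs : ∀ g, s * f g * s⁻¹ = f (ψ g)) (g : G) :
    lift f s hs (base ψ g) = f g :=
  PresentedGroup.toGroup.of _

@[simp] lemma lift_stable (f : G →* H) (s : H) (hs : ∀ g, s * f g * s⁻¹ = f (ψ g)) :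
    lift f s hs (stable ψ) = s :=
  PresentedGroup.toGroup.of _

lemma hom_ext {f₁ f₂ : MappingTorus ψ →* H} (hbase : f₁.comp (base ψ) = f₂.comp (base ψ))
    (hstable : f₁ (stable ψ) = f₂ (stable ψ)) : f₁ = f₂ :=
  PresentedGroup.ext <| by
    rintro (g | ⟨⟩)
    · exact DFunLike.congr_fun hbase g
    · exact hstable

end Presentation

section Index

variable {G : Type*} [Group G] (ψ : G →* G) (m : ℕ)

def stablePowClosure : Subgroup (MappingTorus ψ) :=
  Subgroup.closure (insert (stable ψ ^ m) (Set.range (base ψ)))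

lemma base_mem_stablePowClosure (g : G) : base ψ g ∈ stablePowClosure ψ m :=
  Subgroup.subset_closure (Set.mem_insert_of_mem _ ⟨g, rfl⟩)

lemma stable_pow_mem_stablePowClosure : stable ψ ^ m ∈ stablePowClosure ψ m :=
  Subgroup.subset_closure (Set.mem_insert _ _)

lemma stable_conj_mem_stablePowClosure {h : MappingTorus ψ} (hh : h ∈ stablePowClosure ψ m) :
    stable ψ * h * (stable ψ)⁻¹ ∈ stablePowClosure ψ m := by
  suffices (stablePowClosure ψ m).map (MulAut.conj (stable ψ)).toMonoidHom ≤
      stablePowClosure ψ m from this ⟨h, hh, rfl⟩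
  refine Subgroup.map_le_iff_le_comap.2 <| (Subgroup.closure_le _).2 <|
    Set.insert_subset_iff.2 ⟨?_, ?_⟩
  · show stable ψ * stable ψ ^ m * (stable ψ)⁻¹ ∈ stablePowClosure ψ m
    rw [← pow_succ', pow_succ, mul_inv_cancel_right]
    exact stable_pow_mem_stablePowClosure ψ m
  · rintro _ ⟨g, rfl⟩
    show stable ψ * base ψ g * (stable ψ)⁻¹ ∈ stablePowClosure ψ m
    rw [stable_mul_base_mul_inv]
    exact base_mem_stablePowClosure ψ m (ψ g)

lemma stable_pow_conj_mem_stablePowClosure (n : ℕ) {h : MappingTorus ψ}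
    (hh : h ∈ stablePowClosure ψ m) :
    stable ψ ^ n * h * (stable ψ ^ n)⁻¹ ∈ stablePowClosure ψ m := by
  induction n with
  | zero => simpa using hh
  | succ n ih =>
    have h_eq : stable ψ ^ (n + 1) * h * (stable ψ ^ (n + 1))⁻¹ =
        stable ψ * (stable ψ ^ n * h * (stable ψ ^ n)⁻¹) * (stable ψ)⁻¹ := by group
    rw [h_eq]
    exact stable_conj_mem_stablePowClosure ψ m ih

lemma stablePowClosure_normal [NeZero m] : (stablePowClosure ψ m).Normal := by
  obtain ⟨n, rfl⟩ : ∃ n, m = n + 1 := Nat.exists_eq_succ_of_ne_zero (NeZero.ne m)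
  rw [← Subgroup.normalizer_eq_top_iff, eq_top_iff, ← closure_insert_stable_range_base,
    Subgroup.closure_le, Set.insert_subset_iff]
  refine ⟨Subgroup.mem_normalizer_iff.2 fun h => ⟨stable_conj_mem_stablePowClosure ψ _, ?_⟩,
    fun _ ⟨g, hg⟩ => Subgroup.le_normalizer (hg ▸ base_mem_stablePowClosure ψ _ g)⟩
  intro hconj
  have h_eq : h = stable ψ ^ n * ((stable ψ ^ (n + 1))⁻¹ * (stable ψ * h * (stable ψ)⁻¹) *
      stable ψ ^ (n + 1)) * (stable ψ ^ n)⁻¹ := by group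
  rw [h_eq]
  refine stable_pow_conj_mem_stablePowClosure ψ _ n (mul_mem (mul_mem ?_ hconj) ?_)
  · exact inv_mem (stable_pow_mem_stablePowClosure ψ _)
  · exact stable_pow_mem_stablePowClosure ψ _

def heightMod : MappingTorus ψ →* Multiplicative (ZMod m) :=
  lift 1 (Multiplicative.ofAdd 1) fun _ => by simp

lemma heightMod_surjective [NeZero m] : Function.Surjective (heightMod ψ m) := by
  intro k
  refine ⟨stable ψ ^ (Multiplicative.toAdd k).val, ?_⟩
  simp [heightMod, ← ofAdd_nsmul]

lemma stablePowClosure_le_ker_heightMod : stablePowClosure ψ m ≤ (heightMod ψ m).ker := by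
  refine (Subgroup.closure_le _).2 <| Set.insert_subset_iff.2 ⟨?_, ?_⟩
  · simp [heightMod, ← ofAdd_nsmul]
  · rintro _ ⟨g, rfl⟩
    simp [heightMod]

lemma ker_heightMod_le_stablePowClosure [NeZero m] :
    (heightMod ψ m).ker ≤ stablePowClosure ψ m := by
  have := stablePowClosure_normal ψ m
  intro g hg
  have h_cyclic : (g : MappingTorus ψ ⧸ stablePowClosure ψ m) ∈
      Subgroup.zpowers (stable ψ : MappingTorus ψ ⧸ stablePowClosure ψ m) := by
    suffices ⊤ ≤ (Subgroup.zpowers _).comap (QuotientGroup.mk' (stablePowClosure ψ m)) from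
      this (Subgroup.mem_top g)
    rw [← closure_insert_stable_range_base, Subgroup.closure_le, Set.insert_subset_iff]
    refine ⟨Subgroup.mem_zpowers _, ?_⟩
    rintro _ ⟨x, rfl⟩
    simp [(QuotientGroup.eq_one_iff _).2 (base_mem_stablePowClosure ψ m x)]
  obtain ⟨k, hk⟩ := h_cyclic
  have h_quot : (stable ψ ^ k)⁻¹ * g ∈ stablePowClosure ψ m :=
    QuotientGroup.eq.mp (by rwa [QuotientGroup.mk_zpow])
  have h_ker : stable ψ ^ k ∈ (heightMod ψ m).ker := by
    simpa using mul_mem hg (inv_mem (stablePowClosure_le_ker_heightMod ψ m h_quot))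
  obtain ⟨j, rfl⟩ : (m : ℤ) ∣ k := by
    rw [← ZMod.intCast_zmod_eq_zero_iff_dvd]
    simpa [heightMod, ← ofAdd_zsmul] using h_ker
  simpa [zpow_mul] using
    mul_mem (zpow_mem (stable_pow_mem_stablePowClosure ψ m) j) h_quot

lemma index_stablePowClosure [NeZero m] : (stablePowClosure ψ m).index = m := by
  rw [le_antisymm (stablePowClosure_le_ker_heightMod ψ m) (ker_heightMod_le_stablePowClosure ψ m),
    Subgroup.index_ker, MonoidHom.range_eq_top.2 (heightMod_surjective ψ m), Subgroup.card_top]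
  simp

end Index

end MappingTorus

abbrev twistedPow {G : Type*} [Group G] (φ : G →* G) (u : G) (m : ℕ) : G →* G :=
  (MulAut.conj u).toMonoidHom.comp (iterateHom φ m)

namespace MappingTorus

section TwistedPow

variable {G : Type*} [Group G] (φ : G →* G) (u : G) (m : ℕ)

def twistedPowHom : MappingTorus (twistedPow φ u m) →* MappingTorus φ :=
  lift (base φ) (base φ u * stable φ ^ m) fun g => by
    calc base φ u * stable φ ^ m * base φ g * (base φ u * stable φ ^ m)⁻¹
        = base φ u * (stable φ ^ m * base φ g * (stable φ ^ m)⁻¹) * (base φ u)⁻¹ := by group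
      _ = base φ (twistedPow φ u m g) := by
        simp [stable_pow_mul_base_mul_inv, iterateHom_apply]

@[simp] lemma twistedPowHom_base (g : G) :
    twistedPowHom φ u m (base (twistedPow φ u m) g) = base φ g :=
  lift_base _ _ _ g

@[simp] lemma twistedPowHom_stable :
    twistedPowHom φ u m (stable (twistedPow φ u m)) = base φ u * stable φ ^ m :=
  lift_stable _ _ _

lemma range_twistedPowHom : (twistedPowHom φ u m).range =
    Subgroup.closure (insert (base φ u * stable φ ^ m) (Set.range (base φ))) := by
  rw [MonoidHom.range_eq_map, ← closure_insert_stable_range_base, MonoidHom.map_closure,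
    Set.image_insert_eq, ← Set.range_comp, twistedPowHom_stable]
  congr 3

variable [NeZero m]

def toWreath : MappingTorus φ →*
    (ZMod m → MappingTorus (twistedPow φ u m)) ⋊[shiftMulAut (ZMod m) _] Multiplicative (ZMod m) :=
  lift (SemidirectProduct.inl.comp <| MonoidHom.pi fun j => (base _).comp (iterateHom φ j.val))
    ⟨Pi.mulSingle (-1) (base _ u⁻¹ * stable _), Multiplicative.ofAdd 1⟩ fun g => by
      rw [MonoidHom.comp_apply, MonoidHom.comp_apply, SemidirectProduct.mk_mul_inl_mul_inv]
      congr 1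
      funext j
      simp only [Pi.mul_apply, Pi.inv_apply, MonoidHom.pi_apply, MonoidHom.comp_apply,
        shiftMulAut_apply, toAdd_ofAdd, iterateHom_apply]
      rcases eq_or_ne j (-1) with rfl | hj
      · rw [Pi.mulSingle_eq_same, neg_add_cancel, ZMod.val_zero, Function.iterate_zero_apply,
          ← Function.iterate_succ_apply, Nat.succ_eq_add_one, ZMod.val_neg_one_add_one]
        calc base _ u⁻¹ * stable _ * base _ g * (base _ u⁻¹ * stable _)⁻¹
            = base _ u⁻¹ * (stable _ * base _ g * (stable _)⁻¹) * (base _ u⁻¹)⁻¹ := by group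
          _ = base (twistedPow φ u m) ((⇑φ)^[m] g) := by
            simp only [stable_mul_base_mul_inv, twistedPow, MonoidHom.coe_comp,
              MulEquiv.coe_toMonoidHom, Function.comp_apply, MulAut.conj_apply, iterateHom_apply,
              map_mul, map_inv]
            group
      · rw [Pi.mulSingle_eq_of_ne hj, one_mul, inv_one, mul_one,
          ZMod.val_add_one_of_ne_neg_one hj, Function.iterate_succ_apply]

@[simp] lemma toWreath_base (g : G) : toWreath φ u m (base φ g) =
    SemidirectProduct.inl fun j => base (twistedPow φ u m) (iterateHom φ j.val g) :=
  lift_base _ _ _ g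

lemma toWreath_stable : toWreath φ u m (stable φ) =
    ⟨Pi.mulSingle (-1) (base _ u⁻¹ * stable _), Multiplicative.ofAdd 1⟩ :=
  lift_stable _ _ _

lemma right_toWreath_stable_pow (n : ℕ) :
    (toWreath φ u m (stable φ ^ n)).right = Multiplicative.ofAdd (n : ZMod m) := by
  rw [← SemidirectProduct.rightHom_eq_right, map_pow, map_pow, toWreath_stable,
    SemidirectProduct.rightHom_eq_right, ← ofAdd_nsmul, nsmul_one]

lemma left_toWreath_stable_pow_succ (n : ℕ) :
    (toWreath φ u m (stable φ ^ (n + 1))).left 0 = (toWreath φ u m (stable φ ^ n)).left 0 *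
      Pi.mulSingle (M := fun _ : ZMod m => MappingTorus (twistedPow φ u m)) (-1)
        (base _ u⁻¹ * stable _) (n : ZMod m) := by
  rw [pow_succ, map_mul, SemidirectProduct.mul_left, right_toWreath_stable_pow, toWreath_stable]
  simp

lemma left_toWreath_stable_pow_of_le {n : ℕ} (hn : n ≤ (-1 : ZMod m).val) :
    (toWreath φ u m (stable φ ^ n)).left 0 = 1 := by
  induction n with
  | zero => rfl
  | succ n ih =>
    have hnm : n < m := (Nat.lt_of_succ_le hn).trans (ZMod.val_lt _)
    rw [left_toWreath_stable_pow_succ, ih (by omega), Pi.mulSingle_eq_of_ne, one_mul]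
    intro h
    have := congrArg ZMod.val h
    rw [ZMod.val_natCast_of_lt hnm] at this
    omega

lemma left_toWreath_stable_pow_self :
    (toWreath φ u m (stable φ ^ m)).left 0 = base (twistedPow φ u m) u⁻¹ * stable _ := by
  have := left_toWreath_stable_pow_succ φ u m (-1 : ZMod m).val
  rwa [ZMod.val_neg_one_add_one, left_toWreath_stable_pow_of_le φ u m le_rfl,
    ZMod.natCast_zmod_val, Pi.mulSingle_eq_same, one_mul] at this

lemma right_toWreath_twistedPowHom (w : MappingTorus (twistedPow φ u m)) :
    (toWreath φ u m (twistedPowHom φ u m w)).right = 1 := by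
  suffices SemidirectProduct.rightHom.comp ((toWreath φ u m).comp (twistedPowHom φ u m)) = 1 from
    DFunLike.congr_fun this w
  refine hom_ext (MonoidHom.ext fun g => ?_) ?_
  · simp
  · rw [MonoidHom.comp_apply, MonoidHom.comp_apply, twistedPowHom_stable, map_mul, map_mul,
      toWreath_base, SemidirectProduct.rightHom_inl, one_mul, SemidirectProduct.rightHom_eq_right,
      right_toWreath_stable_pow]
    simp

lemma left_toWreath_twistedPowHom (w : MappingTorus (twistedPow φ u m)) :
    (toWreath φ u m (twistedPowHom φ u m w)).left 0 = w := by
  let ν : MappingTorus (twistedPow φ u m) →* MappingTorus (twistedPow φ u m) :=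
    { toFun := fun w => (toWreath φ u m (twistedPowHom φ u m w)).left 0
      map_one' := by simp
      map_mul' := fun a b => by
        simp [SemidirectProduct.mul_left, right_toWreath_twistedPowHom] }
  suffices ν = MonoidHom.id _ from DFunLike.congr_fun this w
  refine hom_ext (MonoidHom.ext fun g => ?_) ?_
  · simp [ν, iterateHom]
  · show (toWreath φ u m (twistedPowHom φ u m (stable _))).left 0 = stable _
    rw [twistedPowHom_stable, map_mul, SemidirectProduct.mul_left, toWreath_base,
      SemidirectProduct.right_inl, map_one, MulAut.one_apply, Pi.mul_apply,
      left_toWreath_stable_pow_self, SemidirectProduct.left_inl]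
    simp [iterateHom]

lemma twistedPowHom_injective : Function.Injective (twistedPowHom φ u m) :=
  Function.LeftInverse.injective (g := fun x => (toWreath φ u m x).left 0)
    (left_toWreath_twistedPowHom φ u m)

end TwistedPow

end MappingTorus

theorem stmt8_general {α : Type*} (φ : FreeGroup α →* FreeGroup α)
    (u : FreeGroup α) (m : ℕ) (hm : 1 ≤ m) :
    Subgroup.closure
        (insert (MappingTorus.base φ u * MappingTorus.stable φ ^ m)
          (Set.range (MappingTorus.base φ)))
      = Subgroup.closure
          (insert (MappingTorus.stable φ ^ m) (Set.range (MappingTorus.base φ))) ∧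
    (Subgroup.closure
        (insert (MappingTorus.base φ u * MappingTorus.stable φ ^ m)
          (Set.range (MappingTorus.base φ)))).index = m ∧
    ∃ e : MappingTorus ((MulAut.conj u).toMonoidHom.comp (iterateHom φ m)) ≃*
        (Subgroup.closure
          (insert (MappingTorus.base φ u * MappingTorus.stable φ ^ m)
            (Set.range (MappingTorus.base φ)))),
      (∀ x : FreeGroup α,
        (e (MappingTorus.base ((MulAut.conj u).toMonoidHom.comp (iterateHom φ m)) x) :
            MappingTorus φ) = MappingTorus.base φ x) ∧
      (e (MappingTorus.stable ((MulAut.conj u).toMonoidHom.comp (iterateHom φ m))) :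
          MappingTorus φ)
        = MappingTorus.base φ u * MappingTorus.stable φ ^ m := by
  have : NeZero m := ⟨by omega⟩
  have h_closure := Subgroup.closure_insert_mul_of_mem
    (Subgroup.subset_closure (Set.mem_range_self (f := MappingTorus.base φ) u))
    (MappingTorus.stable φ ^ m)
  refine ⟨h_closure, h_closure ▸ MappingTorus.index_stablePowClosure φ m, ?_⟩
  exact ⟨(MonoidHom.ofInjective (MappingTorus.twistedPowHom_injective φ u m)).trans
      (MulEquiv.subgroupCongr (MappingTorus.range_twistedPowHom φ u m)),
    MappingTorus.twistedPowHom_base φ u m, MappingTorus.twistedPowHom_stable φ u m⟩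

/-- For `u ∈ F` and `m ≥ 1`, the subgroup `⟨u t^m, F⟩` of `G_φ` equals `⟨t^m, F⟩`,
has index `m`, and with `s = u t^m` is isomorphic to the mapping torus of
`ψ : x ↦ u φ^m(x) u⁻¹` via an isomorphism restricting to the identity on `F` and
sending the stable letter to `s`. -/
theorem stmt8 {α : Type*} (φ : FreeGroup α →* FreeGroup α) (hφ : Function.Injective φ)
    (u : FreeGroup α) (m : ℕ) (hm : 1 ≤ m) :
    Subgroup.closure
        (insert (MappingTorus.base φ u * MappingTorus.stable φ ^ m)
          (Set.range (MappingTorus.base φ)))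
      = Subgroup.closure
          (insert (MappingTorus.stable φ ^ m) (Set.range (MappingTorus.base φ))) ∧
    (Subgroup.closure
        (insert (MappingTorus.base φ u * MappingTorus.stable φ ^ m)
          (Set.range (MappingTorus.base φ)))).index = m ∧
    ∃ e : MappingTorus ((MulAut.conj u).toMonoidHom.comp (iterateHom φ m)) ≃*
        (Subgroup.closure
          (insert (MappingTorus.base φ u * MappingTorus.stable φ ^ m)
            (Set.range (MappingTorus.base φ)))),
      (∀ x : FreeGroup α,
        (e (MappingTorus.base ((MulAut.conj u).toMonoidHom.comp (iterateHom φ m)) x) :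
            MappingTorus φ) = MappingTorus.base φ x) ∧
      (e (MappingTorus.stable ((MulAut.conj u).toMonoidHom.comp (iterateHom φ m))) :
          MappingTorus φ)
        = MappingTorus.base φ u * MappingTorus.stable φ ^ m :=
  stmt8_general φ u m hm
end

section
/- Let G_φ be the mapping torus group of an automorphism φ of a free group F, with stable letter t. Let u ∈ F, m ≥ 1 an integer, s = u t^m, and let V ≤ F be a nontrivial finitely generated subgroup with s V s⁻¹ ≤ V, and set H = ⟨s, V⟩. Then in fact s V s⁻¹ = V, the map ψ : V → V defined by ψ(y) = u φ^m(y) u⁻¹ is an automorphism of V, and H is isomorphic to the semidirect product V ⋊_ψ ℤ (with the generator of ℤ corresponding to s). -/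
/-! Put `Θ = conj u ∘ φ^m`, an automorphism of `F` with `Θ V ≤ V`; in `G_φ` conjugation by
`s = u t^m` acts on `F` as `Θ`. By M. Hall's theorem a finitely generated subgroup of a free group
is separable: the cosets of `V` reached by suffixes of the generators of `V` and of a given `x ∉ V`
form a finite set on which every letter acts as a partial permutation, and completing these
permutations gives a finite permutation representation in which `V` fixes the coset `V` while `x`
moves it. If `Θ x ∈ V` but `x ∉ V`, take such a finite quotient `ρ` with `ρ x ∉ ρ V`; by pigeonhole
`ρ ∘ Θ⁻ⁱ = ρ ∘ Θ⁻ʲ` on `V` for some `i < j`, and evaluating at `Θʲ x ∈ V` gives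
`ρ x = ρ (Θ^(j-i) x) ∈ ρ V`. So `Θ V = V` and `ψ = Θ|_V` is an automorphism. Finally
`(v, k) ↦ v sᵏ` maps `V ⋊_ψ ℤ` onto `⟨s, V⟩`, injectively because `G_φ ≅ F ⋊_φ ℤ` and `s` has
`t`-exponent `m ≠ 0`. -/

universe u

/-- `V` is closed in the profinite topology of `G`. -/
def Subgroup.IsSeparable {G : Type u} [Group G] (V : Subgroup G) : Prop :=
  ∀ x ∉ V, ∃ (Q : Type u) (_ : Group Q) (_ : Finite Q) (ρ : G →* Q), ρ x ∉ V.map ρ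

theorem Set.Finite.exists_perm_extending {X : Type*} {D : Set X} (hD : D.Finite) {e : X → X}
    (he : e.Injective) : ∃ τ : Equiv.Perm D, ∀ d : D, e d ∈ D → (τ d : X) = e d := by
  have := hD.to_subtype
  obtain ⟨τ, hτ⟩ := Equiv.Perm.exists_extending_pair (fun d : {d : D // e d ∈ D} => d.1)
    (fun d => ⟨e d.1, d.2⟩) Subtype.val_injective
    fun d d' h => Subtype.ext (Subtype.ext (he (congrArg Subtype.val h)))
  exact ⟨τ, fun d hd => congrArg Subtype.val (hτ ⟨d, hd⟩)⟩

namespace FreeGroup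

section PermutationRepresentation

variable {α X : Type*} [MulAction (FreeGroup α) X] {D : Set X} {σ : α → Equiv.Perm D}

theorem perm_inv_apply_of_mem
    (hσ : ∀ a (d : D), of a • (d : X) ∈ D → (σ a d : X) = of a • (d : X))
    (a : α) (d : D) (hd : (of a)⁻¹ • (d : X) ∈ D) : ((σ a)⁻¹ d : X) = (of a)⁻¹ • (d : X) := by
  have h : σ a ⟨_, hd⟩ = d := Subtype.ext <| by
    rw [hσ a ⟨_, hd⟩ (by simp), smul_inv_smul]
  exact congrArg Subtype.val (Equiv.Perm.inv_eq_iff_eq.mpr h.symm)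

theorem lift_mk_apply_of_suffix_mem
    (hσ : ∀ a (d : D), of a • (d : X) ∈ D → (σ a d : X) = of a • (d : X)) :
    ∀ (l : List (α × Bool)) (p : D), (∀ t, t <:+ l → mk t • (p : X) ∈ D) →
      (lift σ (mk l) p : X) = mk l • (p : X)
  | [], p, _ => by simp [← one_eq_mk]
  | (a, b) :: l, p, hl => by
    have hsplit : mk ((a, b) :: l) = mk [(a, b)] * mk l := by rw [mul_mk]; rfl
    have ih := lift_mk_apply_of_suffix_mem hσ l p fun t ht => hl t (ht.trans (l.suffix_cons _))
    have hmem := hl _ List.suffix_rfl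
    rw [hsplit, mul_smul, ← ih] at hmem ⊢
    rw [_root_.map_mul, Equiv.Perm.mul_apply]
    cases b
    · have hinv : mk [(a, false)] = (of a)⁻¹ := rfl
      rw [hinv] at hmem ⊢
      rw [_root_.map_inv, lift_apply_of, perm_inv_apply_of_mem hσ a _ hmem]
    · exact hσ a _ hmem

end PermutationRepresentation

theorem isSeparable_of_fg {α : Type u} {V : Subgroup (FreeGroup α)} (hV : V.FG) :
    V.IsSeparable := by
  classical
  intro x hx
  obtain ⟨S, rfl⟩ := hV
  set V := Subgroup.closure (S : Set (FreeGroup α))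
  have hsmul (g : FreeGroup α) : g • ((1 : FreeGroup α) : FreeGroup α ⧸ V) = g := by
    rw [MulAction.Quotient.smul_coe, smul_eq_mul, mul_one]
  let P : Set (List (α × Bool)) := ⋃ y ∈ insert x S, {t | t ∈ y.toWord.tails}
  have hP : P.Finite := (insert x S).finite_toSet.biUnion fun y _ => y.toWord.tails.finite_toSet
  let D : Set (FreeGroup α ⧸ V) := (fun t => ((mk t : FreeGroup α) : FreeGroup α ⧸ V)) '' P
  have hD : D.Finite := hP.image _
  have := hD.to_subtype
  choose σ hσ using fun a => hD.exists_perm_extending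
    (MulAction.injective (β := FreeGroup α ⧸ V) (of a : FreeGroup α))
  have hsuffix {y} (hy : y ∈ insert x S) {t} (ht : t <:+ y.toWord) :
      ((mk t : FreeGroup α) : FreeGroup α ⧸ V) ∈ D :=
    ⟨t, Set.mem_biUnion hy ((List.mem_tails _ _).mpr ht), rfl⟩
  let pt : D := ⟨((1 : FreeGroup α) : FreeGroup α ⧸ V),
    hsuffix (Finset.mem_insert_self x S) List.nil_suffix⟩
  have hlift {y} (hy : y ∈ insert x S) : (lift σ y pt : FreeGroup α ⧸ V) = y := by
    have := lift_mk_apply_of_suffix_mem hσ y.toWord pt fun t ht => by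
      rw [hsmul]; exact hsuffix hy ht
    rwa [mk_toWord, hsmul] at this
  refine ⟨Equiv.Perm D, inferInstance, inferInstance, lift σ, ?_⟩
  rintro ⟨v, hv, hvx⟩
  have hfix : V ≤ (MulAction.stabilizer (Equiv.Perm D) pt).comap (lift σ) :=
    (Subgroup.closure_le _).mpr fun s hs => Subtype.ext <| by
      rw [Equiv.Perm.smul_def, hlift (Finset.mem_insert_of_mem hs)]
      exact QuotientGroup.eq.mpr (by simpa using Subgroup.subset_closure hs)
  apply hx
  have : (lift σ x pt : FreeGroup α ⧸ V) = ((1 : FreeGroup α) : FreeGroup α ⧸ V) := by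
    rw [← hvx]; exact congrArg Subtype.val (hfix hv)
  rw [hlift (Finset.mem_insert_self x S)] at this
  simpa using QuotientGroup.eq.mp this

end FreeGroup

theorem Subgroup.IsSeparable.map_eq_of_map_le {G : Type u} [Group G] {V : Subgroup G}
    (hsep : V.IsSeparable) (hfg : V.FG) (θ : MulAut G) (hθ : V.map θ.toMonoidHom ≤ V) :
    V.map θ.toMonoidHom = V := by
  have hpow (n : ℕ) : ∀ v ∈ V, (θ ^ n) v ∈ V := by
    induction n with
    | zero => exact fun v hv => hv
    | succ n ih =>
      intro v hv
      rw [pow_succ', MulAut.mul_apply]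
      exact hθ ⟨_, ih v hv, rfl⟩
  refine le_antisymm hθ fun g hg => ⟨θ⁻¹ g, ?_, MulAut.apply_inv_self G θ g⟩
  by_contra hx
  obtain ⟨Q, _, _, ρ, hρ⟩ := hsep _ hx
  obtain ⟨S, hS⟩ := hfg
  obtain ⟨i, j, hij, hf⟩ := Set.finite_univ.exists_lt_map_eq_of_forall_mem
    (f := fun k (s : S) => ρ ((θ ^ k)⁻¹ s)) fun _ => Set.mem_univ _
  have hagree :
      Set.EqOn (ρ.comp ((θ ^ i)⁻¹).toMonoidHom) (ρ.comp ((θ ^ j)⁻¹).toMonoidHom) V :=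
    hS ▸ MonoidHom.eqOn_closure fun s hs => congrFun hf ⟨s, hs⟩
  obtain ⟨k, rfl⟩ := Nat.exists_eq_add_of_lt hij
  have hmem (n : ℕ) : (θ ^ (n + 1)) (θ⁻¹ g) ∈ V := by
    rw [pow_succ, MulAut.mul_apply, MulAut.apply_inv_self]; exact hpow n g hg
  have := hagree (hmem (i + k))
  simp only [MonoidHom.comp_apply, MulEquiv.coe_toMonoidHom, MulAut.inv_apply_self] at this
  rw [add_assoc, pow_add, MulAut.mul_apply, MulAut.inv_apply_self] at this
  exact hρ ⟨_, hmem k, this⟩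

theorem iterateHom_eq_pow {Γ : Type*} [Group Γ] (φ : MulAut Γ) (n : ℕ) :
    iterateHom φ.toMonoidHom n = (φ ^ n).toMonoidHom := by
  induction n with
  | zero => rfl
  | succ n ih => rw [iterateHom, ih, pow_succ']; rfl

namespace MappingTorus

variable {G : Type*} [Group G]

theorem stable_mul_base (ψ : G →* G) (g : G) :
    stable ψ * base ψ g = base ψ (ψ g) * stable ψ := by
  have h := PresentedGroup.one_of_mem (rels := mappingTorusRels G ψ) (Or.inr ⟨g, rfl⟩)
  simp only [map_mul, map_inv, mul_inv_eq_iff_eq_mul] at h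
  exact h

theorem stable_pow_mul_base (ψ : G →* G) (n : ℕ) (g : G) :
    stable ψ ^ n * base ψ g = base ψ (iterateHom ψ n g) * stable ψ ^ n := by
  induction n with
  | zero => simp [iterateHom]
  | succ n ih =>
    rw [pow_succ', mul_assoc, ih, ← mul_assoc, stable_mul_base, mul_assoc, ← pow_succ']
    rfl

theorem conj_base (ψ : G →* G) (u : G) (n : ℕ) (v : G) :
    MulAut.conj (base ψ u * stable ψ ^ n) (base ψ v) =
      base ψ (u * iterateHom ψ n v * u⁻¹) := by
  rw [MulAut.conj_apply, mul_inv_rev, mul_assoc (base ψ u), stable_pow_mul_base]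
  simp only [map_mul, map_inv]
  group

def toSemidirectProduct (φ : G ≃* G) :
    MappingTorus φ.toMonoidHom →* G ⋊[zpowersHom (MulAut G) φ] Multiplicative ℤ :=
  PresentedGroup.toGroup (f := Sum.elim SemidirectProduct.inl
    fun _ => SemidirectProduct.inr (Multiplicative.ofAdd 1)) <| by
      rintro r (⟨⟨g, h⟩, rfl⟩ | ⟨g, rfl⟩)
      · simp
      · simp only [map_mul, map_inv, FreeGroup.lift_apply_of, Sum.elim_inl, Sum.elim_inr,
          mul_inv_eq_one]
        rw [← map_inv, ← SemidirectProduct.inl_aut]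
        rfl

theorem toSemidirectProduct_base (φ : G ≃* G) (g : G) :
    toSemidirectProduct φ (base φ.toMonoidHom g) = SemidirectProduct.inl g :=
  PresentedGroup.toGroup.of _

theorem toSemidirectProduct_stable (φ : G ≃* G) :
    toSemidirectProduct φ (stable φ.toMonoidHom) =
      SemidirectProduct.inr (Multiplicative.ofAdd 1) :=
  PresentedGroup.toGroup.of _

theorem base_injective (φ : G ≃* G) : Function.Injective (base φ.toMonoidHom) :=
  .of_comp (f := toSemidirectProduct φ) <| by
    simpa only [Function.comp_def, toSemidirectProduct_base] using SemidirectProduct.inl_injective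

theorem eq_zero_of_zpow_mem_range_base (φ : G ≃* G) (u : G) {n : ℕ} (hn : n ≠ 0) {z : ℤ}
    (hz : (base φ.toMonoidHom u * stable φ.toMonoidHom ^ n) ^ z ∈ (base φ.toMonoidHom).range) :
    z = 0 := by
  obtain ⟨g, hg⟩ := hz
  have h := congrArg (SemidirectProduct.rightHom.comp (toSemidirectProduct φ)) hg
  simp only [MonoidHom.comp_apply, map_zpow, map_mul, map_pow, toSemidirectProduct_base,
    toSemidirectProduct_stable, SemidirectProduct.rightHom_inl,
    SemidirectProduct.rightHom_inr] at h
  simpa [hn, eq_comm] using congrArg Multiplicative.toAdd h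

end MappingTorus

theorem MonoidHom.map_zpow_apply_of_map_apply {N G : Type*} [Group N] [Group G] {f : N →* G}
    {ψ : MulAut N} {χ : MulAut G} (h : ∀ n, f (ψ n) = χ (f n)) (z : ℤ) (n : N) :
    f ((ψ ^ z) n) = (χ ^ z) (f n) := by
  induction z using Int.induction_on generalizing n with
  | zero => rfl
  | succ z ih => rw [zpow_add_one, zpow_add_one, MulAut.mul_apply, ih, h, MulAut.mul_apply]
  | pred z ih =>
    have h' : f (ψ⁻¹ n) = χ⁻¹ (f n) := by
      conv_lhs => rw [← MulAut.inv_apply_self G χ (f _), ← h, MulAut.apply_inv_self]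
    rw [zpow_sub_one, zpow_sub_one, MulAut.mul_apply, ih, h', MulAut.mul_apply]

namespace SemidirectProduct

variable {N G : Type*} [Group N] [Group G] {ψ : MulAut N} {f : N →* G} {s : G}

def liftZPowers (f : N →* G) (s : G) (h : ∀ n, f (ψ n) = MulAut.conj s (f n)) :
    N ⋊[zpowersHom (MulAut N) ψ] Multiplicative ℤ →* G :=
  lift f (zpowersHom G s) fun z => MonoidHom.ext fun n => by
    simpa [map_zpow] using MonoidHom.map_zpow_apply_of_map_apply h z.toAdd n

variable (h : ∀ n, f (ψ n) = MulAut.conj s (f n))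

theorem liftZPowers_apply (p : N ⋊[zpowersHom (MulAut N) ψ] Multiplicative ℤ) :
    liftZPowers f s h p = f p.left * s ^ p.right.toAdd :=
  rfl

@[simp] theorem liftZPowers_inl (n : N) : liftZPowers f s h (inl n) = f n := lift_inl ..

@[simp] theorem liftZPowers_inr (z : Multiplicative ℤ) :
    liftZPowers f s h (inr z) = s ^ z.toAdd :=
  lift_inr ..

theorem range_liftZPowers :
    (liftZPowers f s h).range = Subgroup.closure (insert s (f.range : Set G)) := by
  apply le_antisymm
  · rintro _ ⟨p, rfl⟩
    rw [liftZPowers_apply]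
    exact mul_mem (Subgroup.subset_closure (Set.mem_insert_of_mem _ ⟨_, rfl⟩))
      (zpow_mem (Subgroup.subset_closure (Set.mem_insert _ _)) _)
  · rw [Subgroup.closure_le]
    rintro _ (rfl | ⟨n, rfl⟩)
    · exact ⟨inr (.ofAdd 1), by simp⟩
    · exact ⟨inl n, by simp⟩

theorem liftZPowers_injective (hf : Function.Injective f)
    (hs : ∀ z : ℤ, s ^ z ∈ f.range → z = 0) : Function.Injective (liftZPowers f s h) := by
  refine (injective_iff_map_eq_one _).mpr fun p hp => ?_
  rw [liftZPowers_apply, mul_eq_one_iff_inv_eq, ← map_inv] at hp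
  have hz := hs _ ⟨_, hp⟩
  rw [hz, zpow_zero, ← map_one f] at hp
  ext
  · exact inv_eq_one.mp (hf hp)
  · exact hz

end SemidirectProduct

theorem stmt10_general {α : Type*} (φ : FreeGroup α ≃* FreeGroup α)
    (u : FreeGroup α) (m : ℕ) (hm : 1 ≤ m)
    (V : Subgroup (FreeGroup α)) (hV2 : V.FG)
    (hinv : ∀ v ∈ V, u * iterateHom φ.toMonoidHom m v * u⁻¹ ∈ V) :
    V.map ((MulAut.conj u).toMonoidHom.comp (iterateHom φ.toMonoidHom m)) = V ∧
    ∃ ψ : V ≃* V,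
      (∀ y : V, (ψ y : FreeGroup α) = u * iterateHom φ.toMonoidHom m y * u⁻¹) ∧
      ∃ e : (V ⋊[zpowersHom (MulAut V) ψ] Multiplicative ℤ) ≃*
          (Subgroup.closure
            (insert (MappingTorus.base φ.toMonoidHom u *
                MappingTorus.stable φ.toMonoidHom ^ m)
              ((V.map (MappingTorus.base φ.toMonoidHom) :
                  Subgroup (MappingTorus φ.toMonoidHom)) :
                Set (MappingTorus φ.toMonoidHom)))),
        (∀ y : V,
          (e (SemidirectProduct.inl y) : MappingTorus φ.toMonoidHom)
            = MappingTorus.base φ.toMonoidHom (y : FreeGroup α)) ∧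
        (e (SemidirectProduct.inr (Multiplicative.ofAdd 1)) : MappingTorus φ.toMonoidHom)
          = MappingTorus.base φ.toMonoidHom u * MappingTorus.stable φ.toMonoidHom ^ m := by
  set Θ : MulAut (FreeGroup α) := MulAut.conj u * φ ^ m
  have hΘ : (MulAut.conj u).toMonoidHom.comp (iterateHom φ.toMonoidHom m) = Θ.toMonoidHom := by
    rw [iterateHom_eq_pow]; rfl
  have hΘ_apply (v : FreeGroup α) : Θ v = u * iterateHom φ.toMonoidHom m v * u⁻¹ :=
    (DFunLike.congr_fun hΘ v).symm
  have hmap : V.map Θ.toMonoidHom = V :=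
    (FreeGroup.isSeparable_of_fg hV2).map_eq_of_map_le hV2 Θ <| by
      rintro _ ⟨v, hv, rfl⟩
      exact hΘ_apply v ▸ hinv v hv
  let ψ : V ≃* V := (Θ.subgroupMap V).trans (MulEquiv.subgroupCongr hmap)
  have hψ (y : V) : (ψ y : FreeGroup α) = u * iterateHom φ.toMonoidHom m y * u⁻¹ :=
    hΘ_apply y
  refine ⟨hΘ ▸ hmap, ψ, hψ, ?_⟩
  set f := (MappingTorus.base φ.toMonoidHom).comp V.subtype
  set s := MappingTorus.base φ.toMonoidHom u * MappingTorus.stable φ.toMonoidHom ^ m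
  have hf (y : V) : f (ψ y) = MulAut.conj s (f y) := by
    simp only [f, s, MonoidHom.comp_apply, Subgroup.coe_subtype, hψ, MappingTorus.conj_base]
  have hinj := SemidirectProduct.liftZPowers_injective hf
    ((MappingTorus.base_injective φ).comp Subtype.val_injective)
    fun z ⟨y, hy⟩ => MappingTorus.eq_zero_of_zpow_mem_range_base φ u
      (Nat.one_le_iff_ne_zero.mp hm) ⟨y, hy⟩
  have hrange : (SemidirectProduct.liftZPowers f s hf).range = Subgroup.closure
      (insert s ((V.map (MappingTorus.base φ.toMonoidHom) : Subgroup _) : Set _)) := by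
    rw [SemidirectProduct.range_liftZPowers, MonoidHom.range_comp, Subgroup.range_subtype]
  exact ⟨(MonoidHom.ofInjective hinj).trans (MulEquiv.subgroupCongr hrange),
    fun y => SemidirectProduct.liftZPowers_inl hf y,
    (SemidirectProduct.liftZPowers_inr hf _).trans (zpow_one s)⟩

/-- If `φ` is an automorphism, a sub-mapping torus subgroup `H = ⟨s, V⟩` with
`s V s⁻¹ ≤ V` in fact satisfies `s V s⁻¹ = V`, the map `ψ : y ↦ u φ^m(y) u⁻¹` is an
automorphism of `V`, and `H` is isomorphic to the semidirect product `V ⋊_ψ ℤ` with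
the generator of `ℤ` corresponding to `s`. -/
theorem stmt10 {α : Type*} (φ : FreeGroup α ≃* FreeGroup α)
    (u : FreeGroup α) (m : ℕ) (hm : 1 ≤ m)
    (V : Subgroup (FreeGroup α)) (hV1 : V ≠ ⊥) (hV2 : V.FG)
    (hinv : ∀ v ∈ V, u * iterateHom φ.toMonoidHom m v * u⁻¹ ∈ V) :
    V.map ((MulAut.conj u).toMonoidHom.comp (iterateHom φ.toMonoidHom m)) = V ∧
    ∃ ψ : V ≃* V,
      (∀ y : V, (ψ y : FreeGroup α) = u * iterateHom φ.toMonoidHom m y * u⁻¹) ∧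
      ∃ e : (V ⋊[zpowersHom (MulAut V) ψ] Multiplicative ℤ) ≃*
          (Subgroup.closure
            (insert (MappingTorus.base φ.toMonoidHom u *
                MappingTorus.stable φ.toMonoidHom ^ m)
              ((V.map (MappingTorus.base φ.toMonoidHom) :
                  Subgroup (MappingTorus φ.toMonoidHom)) :
                Set (MappingTorus φ.toMonoidHom)))),
        (∀ y : V,
          (e (SemidirectProduct.inl y) : MappingTorus φ.toMonoidHom)
            = MappingTorus.base φ.toMonoidHom (y : FreeGroup α)) ∧
        (e (SemidirectProduct.inr (Multiplicative.ofAdd 1)) : MappingTorus φ.toMonoidHom)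
          = MappingTorus.base φ.toMonoidHom u * MappingTorus.stable φ.toMonoidHom ^ m :=
  stmt10_general φ u m hm V hV2 hinv
end
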